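/- For any measurable μ, μ̃ : [0,1] → ℝ with μ - μ̃ ∈ L¹(0,1) and σ > 0, ‖f_{μ,σ} - f_{μ̃,σ}‖_1 ≤ C ‖μ - μ̃‖_{L¹(0,1)} / σ for an absolute constant C > 0, where f_{μ,σ}(y) = ∫_0^1 φ_σ(y - μ(x)) dx. -/

import Mathlib

open MeasureTheory Real Set

/-- The Gaussian density with mean 0 and standard deviation `σ`. -/
noncomputable def phi (σ u : ℝ) : ℝ :=
  (Real.sqrt (2 * Real.pi * σ ^ 2))⁻¹ * Real.exp (-u ^ 2 / (2 * σ ^ 2))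

/-- `f_{μ,σ}(y) = ∫_0^1 φ_σ(y - μ x) dx`. -/
noncomputable def fdens (μ : ℝ → ℝ) (σ y : ℝ) : ℝ :=
  ∫ x in Set.Icc (0:ℝ) 1, phi σ (y - μ x)

/-!
Writing `g (y - a) - g (y - b) = ∫_a^b g' (y - t) dt` and swapping the `y`- and `t`-integrals
(Tonelli) gives `‖g (· - a) - g (· - b)‖₁ ≤ |a - b| ‖g'‖₁` for every `g` with integrable
derivative. For the Gaussian, which is even and decreasing on `[0, ∞)`,
`‖φ_σ'‖₁ = 2 φ_σ(0) = √(2/π) / σ ≤ 1 / σ`. Moving the absolute value inside the `x`-integral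
that defines `f_{μ,σ} - f_{μ̃,σ}` and swapping integrals once more yields the claim with `C = 1`.
-/

open Filter Topology
open scoped ENNReal

lemma lintegral_enorm_sub_comp_sub_le {g g' : ℝ → ℝ} (hg : ∀ x, HasDerivAt g (g' x) x)
    (hg' : Integrable g') (a b : ℝ) :
    ∫⁻ y, ‖g (y - a) - g (y - b)‖ₑ ≤ ‖a - b‖ₑ * ∫⁻ u, ‖g' u‖ₑ := by
  wlog hab : a ≤ b generalizing a b
  · simpa only [enorm_sub_rev] using this b a (le_of_not_ge hab)
  have hg'_meas : Measurable g' := by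
    simpa only [funext fun x => (hg x).deriv] using measurable_deriv g
  have hftc (y : ℝ) : g (y - a) - g (y - b) = ∫ t in Ioc a b, g' (y - t) := by
    rw [← intervalIntegral.integral_of_le hab, intervalIntegral.integral_comp_sub_left,
      intervalIntegral.integral_eq_sub_of_hasDerivAt (fun x _ => hg x) hg'.intervalIntegrable]
  calc ∫⁻ y, ‖g (y - a) - g (y - b)‖ₑ
      ≤ ∫⁻ y, ∫⁻ t in Ioc a b, ‖g' (y - t)‖ₑ :=
        lintegral_mono fun y => hftc y ▸ enorm_integral_le_lintegral_enorm _
    _ = ∫⁻ t in Ioc a b, ∫⁻ y, ‖g' (y - t)‖ₑ :=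
        lintegral_lintegral_swap (by fun_prop)
    _ = ‖a - b‖ₑ * ∫⁻ u, ‖g' u‖ₑ := by
        simp_rw [lintegral_sub_right_eq_self fun u => ‖g' u‖ₑ]
        rw [setLIntegral_const, Real.volume_Ioc, mul_comm, Real.enorm_eq_ofReal_abs,
          abs_sub_comm, abs_of_nonneg (sub_nonneg.2 hab)]

lemma lintegral_enorm_integral_comp_sub_sub_le {X : Type*} [MeasurableSpace X] {ν : Measure X}
    [SFinite ν] {K : ℝ → ℝ} (hK : Measurable K) {L : ℝ≥0∞}
    (hKL : ∀ a b, ∫⁻ y, ‖K (y - a) - K (y - b)‖ₑ ≤ ‖a - b‖ₑ * L) {f f' : X → ℝ}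
    (hf : Measurable f) (hf' : Measurable f') (hKf : ∀ y, Integrable (fun x => K (y - f x)) ν)
    (hKf' : ∀ y, Integrable (fun x => K (y - f' x)) ν) :
    ∫⁻ y, ‖∫ x, K (y - f x) ∂ν - ∫ x, K (y - f' x) ∂ν‖ₑ ≤ (∫⁻ x, ‖f x - f' x‖ₑ ∂ν) * L := by
  calc ∫⁻ y, ‖∫ x, K (y - f x) ∂ν - ∫ x, K (y - f' x) ∂ν‖ₑ
      ≤ ∫⁻ y, ∫⁻ x, ‖K (y - f x) - K (y - f' x)‖ₑ ∂ν := lintegral_mono fun y => by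
        rw [← integral_sub (hKf y) (hKf' y)]
        exact enorm_integral_le_lintegral_enorm _
    _ = ∫⁻ x, (∫⁻ y, ‖K (y - f x) - K (y - f' x)‖ₑ) ∂ν :=
        lintegral_lintegral_swap (by fun_prop)
    _ ≤ ∫⁻ x, ‖f x - f' x‖ₑ * L ∂ν := lintegral_mono fun x => hKL _ _
    _ = (∫⁻ x, ‖f x - f' x‖ₑ ∂ν) * L := lintegral_mul_const _ (hf.sub hf').enorm

lemma integral_abs_le_toReal_lintegral_enorm {X : Type*} [MeasurableSpace X] {ν : Measure X}
    (f : X → ℝ) : ∫ x, |f x| ∂ν ≤ (∫⁻ x, ‖f x‖ₑ ∂ν).toReal := by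
  have h := norm_integral_le_lintegral_norm (μ := ν) fun x => |f x|
  simp only [Real.norm_eq_abs, abs_abs, ← Real.enorm_eq_ofReal_abs] at h
  exact (le_abs_self _).trans h

section Gaussian

variable {σ : ℝ}

lemma phi_nonneg (σ u : ℝ) : 0 ≤ phi σ u := by
  unfold phi; positivity

lemma phi_le_phi_zero (σ u : ℝ) : phi σ u ≤ phi σ 0 := by
  unfold phi
  refine mul_le_mul_of_nonneg_left (exp_le_exp.2 ?_) (by positivity)
  simpa using div_nonpos_of_nonpos_of_nonneg (neg_nonpos.2 (sq_nonneg u)) (by positivity)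

lemma phi_abs (σ u : ℝ) : phi σ |u| = phi σ u := by
  simp only [phi, sq_abs]

lemma continuous_phi (σ : ℝ) : Continuous (phi σ) := by
  unfold phi; fun_prop

lemma hasDerivAt_phi (σ u : ℝ) : HasDerivAt (phi σ) (-(u / σ ^ 2 * phi σ u)) u := by
  refine ((((hasDerivAt_pow 2 u).neg.div_const (2 * σ ^ 2)).exp).const_mul
    (Real.sqrt (2 * Real.pi * σ ^ 2))⁻¹).congr_deriv ?_
  simp only [phi, Pi.neg_apply]
  field_simp
  ring

lemma integrable_div_sq_mul_phi (hσ : σ ≠ 0) : Integrable fun u => u / σ ^ 2 * phi σ u := by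
  have := (integrable_mul_exp_neg_mul_sq (b := (2 * σ ^ 2)⁻¹) (by positivity)).const_mul
    ((Real.sqrt (2 * Real.pi * σ ^ 2))⁻¹ / σ ^ 2)
  convert this using 2 with u
  unfold phi
  field_simp

lemma tendsto_phi_atTop (hσ : σ ≠ 0) : Tendsto (phi σ) atTop (𝓝 0) := by
  have h : Tendsto (fun u : ℝ => -u ^ 2 / (2 * σ ^ 2)) atTop atBot :=
    (tendsto_neg_atTop_atBot.comp (tendsto_pow_atTop two_ne_zero)).atBot_div_const (by positivity)
  have := (tendsto_exp_atBot.comp h).const_mul (Real.sqrt (2 * Real.pi * σ ^ 2))⁻¹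
  rwa [mul_zero] at this

lemma integral_Ioi_div_sq_mul_phi (hσ : σ ≠ 0) : ∫ u in Ioi 0, u / σ ^ 2 * phi σ u = phi σ 0 := by
  have := integral_Ioi_of_hasDerivAt_of_tendsto' (a := 0) (fun u _ => hasDerivAt_phi σ u)
    (integrable_div_sq_mul_phi hσ).neg.integrableOn (tendsto_phi_atTop hσ)
  rw [integral_neg] at this
  linarith

lemma integral_abs_div_sq_mul_phi (hσ : σ ≠ 0) : ∫ u, |u / σ ^ 2 * phi σ u| = 2 * phi σ 0 := by
  have h (u : ℝ) : |u / σ ^ 2 * phi σ u| = |u| / σ ^ 2 * phi σ |u| := by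
    rw [phi_abs, abs_mul, abs_div, abs_of_nonneg (phi_nonneg σ u), abs_of_nonneg (sq_nonneg σ)]
  simp_rw [h]
  rw [integral_comp_abs (f := fun u => u / σ ^ 2 * phi σ u), integral_Ioi_div_sq_mul_phi hσ]

lemma two_mul_phi_zero_le (hσ : 0 < σ) : 2 * phi σ 0 ≤ σ⁻¹ := by
  have h2π : 2 ≤ Real.sqrt (2 * Real.pi) :=
    Real.le_sqrt_of_sq_le (by nlinarith [Real.pi_gt_three])
  have hphi0 : phi σ 0 = (Real.sqrt (2 * Real.pi))⁻¹ * σ⁻¹ := by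
    rw [phi, Real.sqrt_mul' _ (sq_nonneg σ), Real.sqrt_sq hσ.le, mul_inv]
    simp
  rw [hphi0, ← mul_assoc]
  refine mul_le_of_le_one_left (by positivity) ?_
  rw [← div_eq_mul_inv, div_le_one (by positivity)]
  exact h2π

lemma lintegral_enorm_phi_comp_sub_sub_le (hσ : 0 < σ) (a b : ℝ) :
    ∫⁻ y, ‖phi σ (y - a) - phi σ (y - b)‖ₑ ≤ ‖a - b‖ₑ * ENNReal.ofReal σ⁻¹ := by
  have hderiv := integrable_div_sq_mul_phi hσ.ne'
  calc ∫⁻ y, ‖phi σ (y - a) - phi σ (y - b)‖ₑ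
      ≤ ‖a - b‖ₑ * ∫⁻ u, ‖u / σ ^ 2 * phi σ u‖ₑ := by
        simpa only [enorm_neg] using
          lintegral_enorm_sub_comp_sub_le (hasDerivAt_phi σ) hderiv.neg a b
    _ = ‖a - b‖ₑ * ENNReal.ofReal (2 * phi σ 0) := by
        rw [← ofReal_integral_norm_eq_lintegral_enorm hderiv]
        simp only [Real.norm_eq_abs, integral_abs_div_sq_mul_phi hσ.ne']
    _ ≤ ‖a - b‖ₑ * ENNReal.ofReal σ⁻¹ := by
        gcongr
        exact two_mul_phi_zero_le hσ

lemma integrable_phi_comp {X : Type*} [MeasurableSpace X] {ν : Measure X} [IsFiniteMeasure ν]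
    {f : X → ℝ} (hf : Measurable f) (σ : ℝ) : Integrable (fun x => phi σ (f x)) ν :=
  .of_bound ((continuous_phi σ).measurable.comp hf).aestronglyMeasurable (phi σ 0)
    (ae_of_all _ fun _ => (Real.norm_of_nonneg (phi_nonneg σ _)).trans_le (phi_le_phi_zero σ _))

end Gaussian

/-- L¹ stability in the transfer function:
`‖f_{μ,σ} - f_{μ̃,σ}‖₁ ≤ C ‖μ - μ̃‖_{L¹(0,1)}/σ` for an absolute constant `C`. -/
theorem L1_stability_fdens :
    ∃ C > 0, ∀ (μ μt : ℝ → ℝ), Measurable μ → Measurable μt →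
      IntegrableOn (fun x => |μ x - μt x|) (Set.Icc (0:ℝ) 1) →
      ∀ σ : ℝ, 0 < σ →
      (∫ y, |fdens μ σ y - fdens μt σ y|) ≤
        C * (∫ x in Set.Icc (0:ℝ) 1, |μ x - μt x|) / σ := by
  refine ⟨1, one_pos, fun μ μt hμ hμt hL1 σ hσ => ?_⟩
  have hbound : ∫⁻ y, ‖fdens μ σ y - fdens μt σ y‖ₑ
      ≤ (∫⁻ x in Icc 0 1, ‖μ x - μt x‖ₑ) * ENNReal.ofReal σ⁻¹ :=
    lintegral_enorm_integral_comp_sub_sub_le (continuous_phi σ).measurable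
      (lintegral_enorm_phi_comp_sub_sub_le hσ) hμ hμt
      (fun _ => integrable_phi_comp (measurable_const.sub hμ) σ)
      (fun _ => integrable_phi_comp (measurable_const.sub hμt) σ)
  have hL1' : ∫⁻ x in Icc 0 1, ‖μ x - μt x‖ₑ
      = ENNReal.ofReal (∫ x in Icc 0 1, |μ x - μt x|) := by
    rw [ofReal_integral_eq_lintegral_ofReal hL1 (ae_of_all _ fun _ => abs_nonneg _)]
    simp only [Real.enorm_eq_ofReal_abs]
  calc ∫ y, |fdens μ σ y - fdens μt σ y|
      ≤ (∫⁻ y, ‖fdens μ σ y - fdens μt σ y‖ₑ).toReal :=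
        integral_abs_le_toReal_lintegral_enorm _
    _ ≤ (∫ x in Icc 0 1, |μ x - μt x|) * σ⁻¹ := by
        refine ENNReal.toReal_le_of_le_ofReal (by positivity) (hbound.trans_eq ?_)
        rw [hL1', ← ENNReal.ofReal_mul (by positivity)]
    _ = 1 * (∫ x in Icc 0 1, |μ x - μt x|) / σ := by ring
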